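/- arXiv:1503.01519 — 4 statements merged into one kernel-verified Lean document; each statement's English description precedes it below -/
import Mathlib

section
/- Let Ω ⊆ ℂ be a hyperbolic domain and let p : 𝔻 → Ω be a surjective holomorphic covering map from the unit disk. Then Ĉ(Ω) := inf_{z∈𝔻} ε_Ω(p(z)) · (1+|p(z)|²) / ((1−|z|²)·|p′(z)|) satisfies Ĉ(Ω) ≤ 2·C(Ω), where C(Ω) := inf_{z∈𝔻} d_Ω(p(z)) / ((1−|z|²)·|p′(z)|). -/
open Set Metric
open scoped Classical

/-- The quantity `τ(z,w) = |z-w| / |1 + z·conj w|`, valued in `ℝ≥0∞` so that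
antipodal pairs (where the denominator vanishes) get the value `∞`. -/
noncomputable def tauE (z w : ℂ) : ENNReal :=
  ENNReal.ofReal (‖z - w‖) / ENNReal.ofReal (‖1 + z * (starRingEnd ℂ) w‖)

/-- `ε_Ω(z)`: the infimum of `τ(z,a)` over the boundary of `Ω` in the Riemann sphere,
i.e. over the frontier of `Ω` in `ℂ`, together with `∞` (where `τ(z,∞) = 1/|z|`)
when `Ω` is unbounded. -/
noncomputable def epsOm (Ω : Set ℂ) (z : ℂ) : ℝ :=
  ((⨅ a ∈ frontier Ω, tauE z a) ⊓
    (if Bornology.IsBounded Ω then ⊤ else 1 / ENNReal.ofReal ‖z‖)).toReal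

/-- A domain in `ℂ` is hyperbolic if it is open, connected,
and its complement contains at least two points. -/
def IsHyperbolicDomain (Ω : Set ℂ) : Prop :=
  IsOpen Ω ∧ IsConnected Ω ∧ Set.Nontrivial Ωᶜ

/-!
The theorem follows from the pointwise bound `ε_Ω(w) (1 + |w|²) ≤ 2 d_Ω(w)` for `w ∈ Ω`,
after dividing by `(1 - |z|²) |p'(z)|` at `w = p(z)` and taking infima.

For the pointwise bound let `d = d_Ω(w)`. If `2|w| d ≤ 1 + |w|²`, a nearest boundary point `a`
has `|1 + w ā| ≥ 1 + |w|² - |w| d ≥ (1 + |w|²) / 2`, so `τ(w, a) ≤ 2d / (1 + |w|²)`.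
Otherwise `w ≠ 0` and it suffices that `ε_Ω(w) ≤ 1/|w|`: this is the point `∞` of `∂̂Ω` when `Ω`
is unbounded, and when `Ω` is bounded the ray `{c w : c ≥ 1}` leaves `Ω` through a boundary
point `a = c w`, for which `τ(w, a) = (c - 1)|w| / (1 + c|w|²) ≤ 1/|w|`.
-/

theorem IsPreconnected.inter_frontier_nonempty {X : Type*} [TopologicalSpace X] {s t : Set X}
    (hs : IsPreconnected s) (hst : (s ∩ t).Nonempty) (hst' : (s \ t).Nonempty) :
    (s ∩ frontier t).Nonempty := by
  by_contra hfr
  have hcover : s ⊆ interior t ∪ (closure t)ᶜ := fun x hx => by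
    by_contra hx'
    simp only [mem_union, mem_compl_iff, not_or, not_not] at hx'
    exact hfr ⟨x, hx, hx'.2, hx'.1⟩
  obtain ⟨x, -, hxint, hxcl⟩ := hs _ _ isOpen_interior isClosed_closure.isOpen_compl hcover
    (hst.mono fun x hx => ⟨hx.1, (hcover hx.1).resolve_right (not_not.2 (subset_closure hx.2))⟩)
    (hst'.mono fun x hx => ⟨hx.1, (hcover hx.1).resolve_left fun h => hx.2 (interior_subset h)⟩)
  exact hxcl (subset_closure (interior_subset hxint))

theorem exists_one_le_ofReal_mul_mem_frontier {Ω : Set ℂ} (hb : Bornology.IsBounded Ω) {w : ℂ}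
    (hw : w ∈ Ω) (hw0 : w ≠ 0) : ∃ c : ℝ, 1 ≤ c ∧ (c : ℂ) * w ∈ frontier Ω := by
  have hray : IsPreconnected ((fun c : ℝ => (c : ℂ) * w) '' Ici 1) :=
    isPreconnected_Ici.image _ (by fun_prop)
  obtain ⟨C, hC⟩ := isBounded_iff_forall_norm_le.1 hb
  have hW : 0 < ‖w‖ := norm_pos_iff.2 hw0
  have hout : ((fun c : ℝ => (c : ℂ) * w) '' Ici 1 \ Ω).Nonempty := by
    refine ⟨((|C| + 1) / ‖w‖ + 1 : ℝ) * w,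
      ⟨_, by rw [mem_Ici, le_add_iff_nonneg_left]; positivity, rfl⟩, fun hmem => ?_⟩
    have hle := hC _ hmem
    rw [norm_mul, Complex.norm_real, Real.norm_of_nonneg (by positivity), add_mul,
      div_mul_cancel₀ _ hW.ne'] at hle
    linarith [le_abs_self C]
  obtain ⟨_, ⟨c, hc, rfl⟩, hfr⟩ :=
    hray.inter_frontier_nonempty ⟨w, ⟨1, self_mem_Ici, by simp⟩, hw⟩ hout
  exact ⟨c, hc, hfr⟩

theorem epsOm_le_of_mem_frontier {Ω : Set ℂ} {w a : ℂ} (ha : a ∈ frontier Ω)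
    (h : 0 < ‖1 + w * (starRingEnd ℂ) a‖) :
    epsOm Ω w ≤ ‖w - a‖ / ‖1 + w * (starRingEnd ℂ) a‖ := by
  have hτ : tauE w a = ENNReal.ofReal (‖w - a‖ / ‖1 + w * (starRingEnd ℂ) a‖) := by
    rw [tauE, ENNReal.ofReal_div_of_pos h]
  exact ENNReal.toReal_le_of_le_ofReal (by positivity) (hτ ▸ inf_le_left.trans (biInf_le _ ha))

theorem epsOm_le_inv_norm_of_not_isBounded {Ω : Set ℂ} (hb : ¬ Bornology.IsBounded Ω) {w : ℂ}
    (hw0 : w ≠ 0) : epsOm Ω w ≤ ‖w‖⁻¹ := by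
  rw [epsOm, if_neg hb, one_div, ← ENNReal.ofReal_inv_of_pos (norm_pos_iff.2 hw0)]
  exact ENNReal.toReal_le_of_le_ofReal (by positivity) inf_le_right

theorem norm_one_add_mul_conj_ofReal_mul (w : ℂ) {c : ℝ} (hc : 0 ≤ c) :
    ‖1 + w * (starRingEnd ℂ) (c * w)‖ = 1 + c * ‖w‖ ^ 2 := by
  rw [map_mul, Complex.conj_ofReal, mul_left_comm, Complex.mul_conj']
  norm_cast
  exact Real.norm_of_nonneg (by positivity)

theorem epsOm_le_inv_norm {Ω : Set ℂ} {w : ℂ} (hw : w ∈ Ω) (hw0 : w ≠ 0) :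
    epsOm Ω w ≤ ‖w‖⁻¹ := by
  by_cases hb : Bornology.IsBounded Ω
  swap
  · exact epsOm_le_inv_norm_of_not_isBounded hb hw0
  obtain ⟨c, hc, ha⟩ := exists_one_le_ofReal_mul_mem_frontier hb hw hw0
  have hW : 0 < ‖w‖ := norm_pos_iff.2 hw0
  have hden := norm_one_add_mul_conj_ofReal_mul w (zero_le_one.trans hc)
  have hnum : ‖w - c * w‖ = (c - 1) * ‖w‖ := by
    rw [← one_sub_mul, norm_mul, ← Complex.ofReal_one, ← Complex.ofReal_sub, Complex.norm_real,
      Real.norm_of_nonpos (by linarith), neg_sub]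
  calc epsOm Ω w ≤ ‖w - c * w‖ / ‖1 + w * (starRingEnd ℂ) (c * w)‖ :=
        epsOm_le_of_mem_frontier ha (by rw [hden]; positivity)
    _ = (c - 1) * ‖w‖ / (1 + c * ‖w‖ ^ 2) := by rw [hnum, hden]
    _ ≤ ‖w‖⁻¹ := by
        rw [div_le_iff₀ (by positivity), ← div_eq_inv_mul, le_div_iff₀ hW]
        nlinarith

theorem sub_norm_mul_le_norm_one_add_mul_conj (w a : ℂ) :
    1 + ‖w‖ ^ 2 - ‖w‖ * ‖w - a‖ ≤ ‖1 + w * (starRingEnd ℂ) a‖ := by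
  calc 1 + ‖w‖ ^ 2 - ‖w‖ * ‖w - a‖
      = ‖1 + w * (starRingEnd ℂ) w‖ - ‖w * (starRingEnd ℂ) (w - a)‖ := by
        rw [Complex.mul_conj', norm_mul, Complex.norm_conj]
        norm_cast
        rw [Real.norm_of_nonneg (by positivity)]
    _ ≤ ‖1 + w * (starRingEnd ℂ) w - w * (starRingEnd ℂ) (w - a)‖ := norm_sub_norm_le _ _
    _ = ‖1 + w * (starRingEnd ℂ) a‖ := by rw [map_sub]; ring_nf

theorem epsOm_mul_le_two_mul_infDist {Ω : Set ℂ} (hfr : (frontier Ω).Nonempty) {w : ℂ}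
    (hw : w ∈ Ω) : epsOm Ω w * (1 + ‖w‖ ^ 2) ≤ 2 * infDist w (frontier Ω) := by
  have hε : 0 ≤ epsOm Ω w := ENNReal.toReal_nonneg
  have hd : 0 ≤ infDist w (frontier Ω) := infDist_nonneg
  rcases le_or_gt (2 * ‖w‖ * infDist w (frontier Ω)) (1 + ‖w‖ ^ 2) with hnear | hfar
  · obtain ⟨a, ha, hda⟩ := isClosed_frontier.exists_infDist_eq_dist hfr w
    rw [dist_eq_norm] at hda
    have hden := sub_norm_mul_le_norm_one_add_mul_conj w a
    rw [← hda] at hden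
    have hpos : 0 < ‖1 + w * (starRingEnd ℂ) a‖ := by nlinarith
    have hτ := epsOm_le_of_mem_frontier ha hpos
    rw [← hda, le_div_iff₀ hpos] at hτ
    nlinarith
  · have hw0 : w ≠ 0 := by
      rintro rfl
      norm_num at hfar
    have hW : 0 < ‖w‖ := norm_pos_iff.2 hw0
    have hεW : epsOm Ω w * ‖w‖ ≤ 1 := by
      rw [← le_div_iff₀ hW, one_div]
      exact epsOm_le_inv_norm hw hw0
    nlinarith [mul_le_mul_of_nonneg_left hfar.le hε]

open scoped Pointwise in
theorem csInf_image_le_mul_csInf_image {α : Type*} {f g : α → ℝ} {s : Set α} {c : ℝ}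
    (hs : s.Nonempty) (hf : BddBelow (f '' s)) (hc : 0 ≤ c) (h : ∀ x ∈ s, f x ≤ c * g x) :
    sInf (f '' s) ≤ c * sInf (g '' s) := by
  rw [← smul_eq_mul, ← Real.sInf_smul_of_nonneg hc, ← image_smul, image_image]
  exact le_csInf (hs.image _) (forall_mem_image.2 fun x hx =>
    (csInf_le hf (mem_image_of_mem f hx)).trans (h x hx))

theorem hatC_le_two_C_general (Ω : Set ℂ) (hΩ : IsHyperbolicDomain Ω) (p : ℂ → ℂ)
    (hmaps : MapsTo p (ball (0 : ℂ) 1) Ω) :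
    sInf ((fun z => epsOm Ω (p z) * (1 + ‖p z‖ ^ 2) /
        ((1 - ‖z‖ ^ 2) * ‖deriv p z‖)) '' ball (0 : ℂ) 1) ≤
      2 * sInf ((fun z => Metric.infDist (p z) (frontier Ω) /
        ((1 - ‖z‖ ^ 2) * ‖deriv p z‖)) '' ball (0 : ℂ) 1) := by
  obtain ⟨-, hconn, hcompl⟩ := hΩ
  have hfr : (frontier Ω).Nonempty :=
    nonempty_frontier_iff.2 ⟨hconn.nonempty, fun h => by simp [h] at hcompl⟩
  have hden : ∀ z ∈ ball (0 : ℂ) 1, 0 ≤ (1 - ‖z‖ ^ 2) * ‖deriv p z‖ := fun z hz => by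
    rw [mem_ball_zero_iff] at hz
    have : ‖z‖ ^ 2 ≤ 1 := pow_le_one₀ (norm_nonneg z) hz.le
    exact mul_nonneg (by linarith) (norm_nonneg _)
  refine csInf_image_le_mul_csInf_image ⟨0, by simp⟩ ⟨0, ?_⟩ zero_le_two fun z hz => ?_
  · rintro _ ⟨z, hz, rfl⟩
    exact div_nonneg (mul_nonneg ENNReal.toReal_nonneg (by positivity)) (hden z hz)
  · rw [mul_div_assoc']
    exact div_le_div_of_nonneg_right (epsOm_mul_le_two_mul_infDist hfr (hmaps hz)) (hden z hz)

theorem hatC_le_two_C (Ω : Set ℂ) (hΩ : IsHyperbolicDomain Ω) (p : ℂ → ℂ)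
    (hmaps : MapsTo p (ball (0 : ℂ) 1) Ω)
    (hsurj : SurjOn p (ball (0 : ℂ) 1) Ω)
    (hdiff : DifferentiableOn ℂ p (ball (0 : ℂ) 1))
    (hcov : IsCoveringMap (Set.MapsTo.restrict p (ball (0 : ℂ) 1) Ω hmaps)) :
    sInf ((fun z => epsOm Ω (p z) * (1 + ‖p z‖ ^ 2) /
        ((1 - ‖z‖ ^ 2) * ‖deriv p z‖)) '' ball (0 : ℂ) 1) ≤
      2 * sInf ((fun z => Metric.infDist (p z) (frontier Ω) /
        ((1 - ‖z‖ ^ 2) * ‖deriv p z‖)) '' ball (0 : ℂ) 1) :=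
  hatC_le_two_C_general Ω hΩ p hmaps
end

section
/- Let Ω ⊆ ℂ be a hyperbolic domain and let p : 𝔻 → Ω be a surjective holomorphic covering map from the unit disk. Then C(Ω) · σ(Ĉ∖Ω) ≤ 4·C̃(Ω), where C(Ω) := inf_{z∈𝔻} d_Ω(p(z)) / ((1−|z|²)·|p′(z)|), C̃(Ω) := inf_{z∈𝔻} δ_Ω(p(z)) · (1+|p(z)|²) / ((1−|z|²)·|p′(z)|), and σ(Ĉ∖Ω) is the spherical diameter of the complement of Ω in the Riemann sphere. -/
open Set Metric
open scoped Classical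

/-- The chordal (spherical) distance `σ(z,w) = |z-w| / √((1+|z|²)(1+|w|²))`. -/
noncomputable def sph (z w : ℂ) : ℝ :=
  ‖z - w‖ / Real.sqrt ((1 + ‖z‖ ^ 2) * (1 + ‖w‖ ^ 2))

/-- `δ_Ω(z)`: infimum of `σ(z,a)` over the boundary of `Ω` in the Riemann sphere,
where the value `σ(z,∞) = 1/√(1+|z|²)` is included when `Ω` is unbounded. -/
noncomputable def deltaOm (Ω : Set ℂ) (z : ℂ) : ℝ :=
  sInf ((fun a => sph z a) '' frontier Ω ∪
    (if Bornology.IsBounded Ω then ∅ else {1 / Real.sqrt (1 + ‖z‖ ^ 2)}))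

/-- The spherical diameter of the complement of `Ω` in the Riemann sphere:
the supremum of `σ(a,b)` over `a, b ∈ (ℂ∖Ω) ∪ {∞}`, where `σ(a,∞) = 1/√(1+|a|²)`
and `σ(∞,∞) = 0`. -/
noncomputable def sphDiamCompl (Ω : Set ℂ) : ℝ :=
  sSup ({ s | ∃ a ∈ Ωᶜ, ∃ b ∈ Ωᶜ, s = sph a b } ∪
    { s | ∃ a ∈ Ωᶜ, s = 1 / Real.sqrt (1 + ‖a‖ ^ 2) } ∪ {(0 : ℝ)})

/-!
The inequality holds pointwise on `Ω`: for `w ∈ Ω` and `d = d_Ω(w)`,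
`d · σ(Ĉ∖Ω) ≤ 4 (1 + |w|²) δ_Ω(w)`; at `w = p(z)` divide by `(1 - |z|²)|p'(z)|` and take infima.

The chordal distance is half the Euclidean distance between stereographic images on the unit
sphere of `ℝ³`, so it is a metric on `Ĉ`. Every finite point `a ∉ Ω` has `|w - a| ≥ d`, which
yields `d σ(α, a) ≤ 2 (1 + |w|²) σ(w, α)` for all `α, a ∈ Ĉ∖Ω`; the triangle inequality
`σ(a, b) ≤ σ(α, a) + σ(α, b)` then gives the constant `4`.
-/

lemma infDist_frontier_le_dist {E : Type*} [NormedAddCommGroup E] [NormedSpace ℝ E]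
    [FiniteDimensional ℝ E] {s : Set E} {x y : E} (hx : x ∈ s) (hy : y ∉ s) :
    infDist x (frontier s) ≤ dist x y := by
  obtain ⟨z, hz, hxz⟩ := exists_mem_frontier_infDist_compl_eq_dist hx
    ((ne_univ_iff_exists_notMem s).2 ⟨y, hy⟩)
  calc infDist x (frontier s) ≤ dist x z := infDist_le_dist_of_mem hz
    _ = infDist x sᶜ := hxz.symm
    _ ≤ dist x y := infDist_le_dist_of_mem hy

lemma mul_csSup_le_mul_csInf {S T : Set ℝ} {a b : ℝ} (ha : 0 ≤ a) (hb : 0 ≤ b) (hS : S.Nonempty)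
    (hT : T.Nonempty) (h : ∀ s ∈ S, ∀ t ∈ T, a * s ≤ b * t) : a * sSup S ≤ b * sInf T := by
  rw [← smul_eq_mul, ← smul_eq_mul, ← Real.sSup_smul_of_nonneg ha, ← Real.sInf_smul_of_nonneg hb]
  refine le_csInf hT.smul_set fun _ ⟨t, ht, hbt⟩ => csSup_le hS.smul_set fun _ ⟨s, hs, has⟩ => ?_
  rw [← hbt, ← has]
  exact h s hs t ht

lemma csInf_image_mul_le_mul_csInf_image {ι : Type*} {s : Set ι} {f g : ι → ℝ} {a b : ℝ}
    (hs : s.Nonempty) (hf : BddBelow (f '' s)) (ha : 0 ≤ a) (hb : 0 ≤ b)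
    (h : ∀ i ∈ s, f i * a ≤ b * g i) : sInf (f '' s) * a ≤ b * sInf (g '' s) := by
  rw [← smul_eq_mul b, ← Real.sInf_smul_of_nonneg hb]
  refine le_csInf (hs.image g).smul_set fun _ ⟨_, ⟨i, hi, hgi⟩, hbg⟩ => ?_
  rw [← hbg, ← hgi]
  exact (mul_le_mul_of_nonneg_right (csInf_le hf (mem_image_of_mem f hi)) ha).trans (h i hi)

section NormedGroup

variable {E : Type*} [SeminormedAddCommGroup E]

lemma norm_sub_le_sqrt_mul_sqrt (x y : E) : ‖x - y‖ ≤ √(1 + ‖x‖ ^ 2) * √(1 + ‖y‖ ^ 2) := by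
  rw [← Real.sqrt_mul (by positivity)]
  refine Real.le_sqrt_of_sq_le ?_
  nlinarith [norm_sub_le x y, norm_nonneg (x - y), norm_nonneg x, norm_nonneg y,
    sq_nonneg (1 - ‖x‖ * ‖y‖)]

lemma div_sqrt_le_sqrt_of_le_norm_sub {d : ℝ} {w x : E} (h : d ≤ ‖w - x‖) :
    d / √(1 + ‖x‖ ^ 2) ≤ √(1 + ‖w‖ ^ 2) := by
  rw [div_le_iff₀ (by positivity)]
  exact h.trans (norm_sub_le_sqrt_mul_sqrt w x)

end NormedGroup

open OnePoint

noncomputable def stereoInv (ζ : OnePoint ℂ) : EuclideanSpace ℝ (Fin 3) :=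
  ζ.elim !₂[0, 0, 1] fun z => (1 + ‖z‖ ^ 2)⁻¹ • !₂[2 * z.re, 2 * z.im, ‖z‖ ^ 2 - 1]

noncomputable def chordalDist (ζ ξ : OnePoint ℂ) : ℝ := dist (stereoInv ζ) (stereoInv ξ) / 2

lemma chordalDist_coe_coe (z w : ℂ) : chordalDist z w = sph z w := by
  have hz : 0 < 1 + ‖z‖ ^ 2 := by positivity
  have hw : 0 < 1 + ‖w‖ ^ 2 := by positivity
  rw [chordalDist, EuclideanSpace.dist_eq, sph, Fin.sum_univ_three,
    ← Real.sqrt_sq (norm_nonneg (z - w)), ← Real.sqrt_div' _ (by positivity),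
    div_eq_iff two_ne_zero, ← Real.sqrt_sq zero_le_two, ← Real.sqrt_mul (by positivity)]
  congr 1
  simp only [Fin.isValue, stereoInv, Complex.sq_norm, Complex.normSq_apply, elim_some,
    PiLp.smul_apply, Matrix.cons_val_zero, smul_eq_mul, Real.dist_eq, sq_abs, Matrix.cons_val_one,
    Matrix.cons_val, Complex.sub_re, Complex.sub_im]
  field_simp
  ring

lemma chordalDist_coe_infty (z : ℂ) : chordalDist z ∞ = 1 / √(1 + ‖z‖ ^ 2) := by
  have hz : 0 < 1 + ‖z‖ ^ 2 := by positivity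
  rw [chordalDist, EuclideanSpace.dist_eq, Fin.sum_univ_three, div_eq_iff two_ne_zero,
    div_mul_eq_mul_div, one_mul, ← Real.sqrt_sq zero_le_two, ← Real.sqrt_div' _ (by positivity)]
  congr 1
  simp only [Fin.isValue, stereoInv, Complex.sq_norm, Complex.normSq_apply, elim_some,
    PiLp.smul_apply, Matrix.cons_val_zero, smul_eq_mul, elim_infty, Matrix.cons_val_one,
    Matrix.cons_val, Real.dist_eq, sq_abs]
  field_simp
  ring

lemma chordalDist_nonneg (ζ ξ : OnePoint ℂ) : 0 ≤ chordalDist ζ ξ :=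
  div_nonneg dist_nonneg zero_le_two

lemma chordalDist_comm (ζ ξ : OnePoint ℂ) : chordalDist ζ ξ = chordalDist ξ ζ := by
  rw [chordalDist, dist_comm, chordalDist]

lemma chordalDist_self (ζ : OnePoint ℂ) : chordalDist ζ ζ = 0 := by
  rw [chordalDist, dist_self, zero_div]

lemma chordalDist_triangle (ζ ξ η : OnePoint ℂ) :
    chordalDist ζ η ≤ chordalDist ζ ξ + chordalDist ξ η := by
  rw [chordalDist, chordalDist, chordalDist, ← add_div]
  exact div_le_div_of_nonneg_right (dist_triangle _ _ _) zero_le_two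

lemma one_add_sq_norm_mul_sph (w a : ℂ) :
    (1 + ‖w‖ ^ 2) * sph w a = √(1 + ‖w‖ ^ 2) * ‖w - a‖ / √(1 + ‖a‖ ^ 2) := by
  have hw : 0 < √(1 + ‖w‖ ^ 2) := by positivity
  rw [sph, Real.sqrt_mul (by positivity)]
  field_simp
  rw [Real.sq_sqrt (by positivity), mul_comm]

lemma mul_sph_le_two {d : ℝ} {w a x : ℂ} (hd : 0 ≤ d) (ha : d ≤ ‖w - a‖) (hx : d ≤ ‖w - x‖) :
    d * sph a x ≤ 2 * ((1 + ‖w‖ ^ 2) * sph w a) := by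
  set Sw := √(1 + ‖w‖ ^ 2)
  set Sx := √(1 + ‖x‖ ^ 2)
  have hSx : 0 < Sx := by positivity
  have key : d * ‖a - x‖ / Sx ≤ 2 * Sw * ‖w - a‖ := calc
    d * ‖a - x‖ / Sx ≤ d * (‖w - a‖ + ‖w - x‖) / Sx := by
      gcongr
      simpa only [norm_sub_rev a w] using norm_sub_le_norm_sub_add_norm_sub a w x
    _ = ‖w - a‖ * (d / Sx) + d * (‖w - x‖ / Sx) := by ring
    _ ≤ ‖w - a‖ * Sw + ‖w - a‖ * Sw := by
      gcongr
      · exact div_sqrt_le_sqrt_of_le_norm_sub hx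
      · exact div_sqrt_le_sqrt_of_le_norm_sub le_rfl
    _ = 2 * Sw * ‖w - a‖ := by ring
  rw [one_add_sq_norm_mul_sph, sph, Real.sqrt_mul (by positivity)]
  calc d * (‖a - x‖ / (√(1 + ‖a‖ ^ 2) * Sx)) = d * ‖a - x‖ / Sx / √(1 + ‖a‖ ^ 2) := by ring
    _ ≤ 2 * Sw * ‖w - a‖ / √(1 + ‖a‖ ^ 2) := by gcongr
    _ = 2 * (Sw * ‖w - a‖ / √(1 + ‖a‖ ^ 2)) := by ring

section ComplementBound

variable {K : Set (OnePoint ℂ)} {w : ℂ} {d : ℝ}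

lemma mul_chordalDist_le_two (hd : 0 ≤ d) (hK : ∀ z : ℂ, (z : OnePoint ℂ) ∈ K → d ≤ ‖w - z‖)
    {α x : OnePoint ℂ} (hα : α ∈ K) (hx : x ∈ K) :
    d * chordalDist α x ≤ 2 * ((1 + ‖w‖ ^ 2) * chordalDist w α) := by
  cases α with
  | infty =>
    rw [chordalDist_coe_infty, mul_one_div, Real.div_sqrt]
    cases x with
    | infty => rw [chordalDist_self, mul_zero]; positivity
    | coe z =>
      rw [chordalDist_comm, chordalDist_coe_infty, mul_one_div]
      exact (div_sqrt_le_sqrt_of_le_norm_sub (hK z hx)).trans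
        (le_mul_of_one_le_left (Real.sqrt_nonneg _) one_le_two)
  | coe a =>
    cases x with
    | infty =>
      have hSw : 1 ≤ √(1 + ‖w‖ ^ 2) := Real.one_le_sqrt.2 (le_add_of_nonneg_right (by positivity))
      rw [chordalDist_coe_infty, chordalDist_coe_coe, one_add_sq_norm_mul_sph, mul_one_div]
      calc d / √(1 + ‖a‖ ^ 2) ≤ √(1 + ‖w‖ ^ 2) * ‖w - a‖ / √(1 + ‖a‖ ^ 2) := by
            gcongr
            exact (hK a hα).trans (le_mul_of_one_le_left (norm_nonneg _) hSw)
        _ ≤ 2 * (√(1 + ‖w‖ ^ 2) * ‖w - a‖ / √(1 + ‖a‖ ^ 2)) :=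
          le_mul_of_one_le_left (by positivity) one_le_two
    | coe z =>
      rw [chordalDist_coe_coe, chordalDist_coe_coe]
      exact mul_sph_le_two hd (hK a hα) (hK z hx)

lemma mul_chordalDist_le_four (hd : 0 ≤ d) (hK : ∀ z : ℂ, (z : OnePoint ℂ) ∈ K → d ≤ ‖w - z‖)
    {a b α : OnePoint ℂ} (ha : a ∈ K) (hb : b ∈ K) (hα : α ∈ K) :
    d * chordalDist a b ≤ 4 * ((1 + ‖w‖ ^ 2) * chordalDist w α) := calc
  d * chordalDist a b ≤ d * chordalDist α a + d * chordalDist α b := by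
    rw [← mul_add, chordalDist_comm α a]
    exact mul_le_mul_of_nonneg_left (chordalDist_triangle a α b) hd
  _ ≤ 2 * ((1 + ‖w‖ ^ 2) * chordalDist w α) + 2 * ((1 + ‖w‖ ^ 2) * chordalDist w α) :=
    add_le_add (mul_chordalDist_le_two hd hK hα ha) (mul_chordalDist_le_two hd hK hα hb)
  _ = 4 * ((1 + ‖w‖ ^ 2) * chordalDist w α) := by ring

end ComplementBound

def sphereFrontier (Ω : Set ℂ) : Set (OnePoint ℂ) :=
  (↑) '' frontier Ω ∪ if Bornology.IsBounded Ω then ∅ else {∞}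

lemma deltaOm_eq_sInf (Ω : Set ℂ) (w : ℂ) :
    deltaOm Ω w = sInf (chordalDist w '' sphereFrontier Ω) := by
  rw [deltaOm, sphereFrontier, image_union, image_image]
  simp only [chordalDist_coe_coe]
  split_ifs <;> simp [chordalDist_coe_infty]

section SphereFrontier

variable {Ω : Set ℂ}

lemma sphereFrontier_subset_compl (hΩ : IsOpen Ω) : sphereFrontier Ω ⊆ ((↑) '' Ω)ᶜ := by
  rintro _ (⟨a, ha, rfl⟩ | h)
  · rw [mem_compl_iff, coe_injective.mem_set_image]
    exact (hΩ.frontier_eq ▸ ha).2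
  · split_ifs at h
    · exact absurd h (notMem_empty _)
    · exact (mem_singleton_iff.1 h) ▸ mem_compl infty_notMem_image_coe

lemma sphereFrontier_nonempty (hΩ : Ω.Nonempty) (hΩc : Ωᶜ.Nonempty) :
    (sphereFrontier Ω).Nonempty := by
  by_cases hb : Bornology.IsBounded Ω
  · obtain ⟨a, ha⟩ := nonempty_frontier_iff.2 ⟨hΩ, fun h => by simp [h] at hΩc⟩
    exact ⟨a, Or.inl (mem_image_of_mem _ ha)⟩
  · exact ⟨∞, Or.inr (by rw [if_neg hb]; rfl)⟩

end SphereFrontier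

lemma sphDiamCompl_eq_sSup (Ω : Set ℂ) :
    sphDiamCompl Ω = sSup (image2 chordalDist ((↑) '' Ω)ᶜ ((↑) '' Ω)ᶜ) := by
  rw [sphDiamCompl, compl_image_coe]
  congr 1
  ext t
  constructor
  · rintro ((⟨a, ha, b, hb, rfl⟩ | ⟨a, ha, rfl⟩) | ht)
    · exact ⟨a, Or.inl ⟨a, ha, rfl⟩, b, Or.inl ⟨b, hb, rfl⟩, chordalDist_coe_coe a b⟩
    · exact ⟨a, Or.inl ⟨a, ha, rfl⟩, ∞, Or.inr rfl, chordalDist_coe_infty a⟩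
    · exact ⟨∞, Or.inr rfl, ∞, Or.inr rfl, (chordalDist_self ∞).trans ht.symm⟩
  · rintro ⟨ζ, hζ, ξ, hξ, rfl⟩
    rcases hζ with ⟨a, ha, rfl⟩ | rfl <;> rcases hξ with ⟨b, hb, rfl⟩ | rfl
    · exact Or.inl (Or.inl ⟨a, ha, b, hb, chordalDist_coe_coe a b⟩)
    · exact Or.inl (Or.inr ⟨a, ha, chordalDist_coe_infty a⟩)
    · exact Or.inl (Or.inr ⟨b, hb, by rw [chordalDist_comm, chordalDist_coe_infty]⟩)
    · exact Or.inr (chordalDist_self ∞)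

lemma sphDiamCompl_nonneg (Ω : Set ℂ) : 0 ≤ sphDiamCompl Ω := by
  rw [sphDiamCompl_eq_sSup]
  exact Real.sSup_nonneg fun _ ⟨ζ, _, ξ, _, h⟩ => h ▸ chordalDist_nonneg ζ ξ

theorem infDist_frontier_mul_sphDiamCompl_le {Ω : Set ℂ} (hΩ : IsOpen Ω) (hΩc : Ωᶜ.Nonempty)
    {w : ℂ} (hw : w ∈ Ω) :
    infDist w (frontier Ω) * sphDiamCompl Ω ≤ 4 * (deltaOm Ω w * (1 + ‖w‖ ^ 2)) := by
  have hK : ∀ z : ℂ, (z : OnePoint ℂ) ∈ ((↑) '' Ω)ᶜ → infDist w (frontier Ω) ≤ ‖w - z‖ :=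
    fun z hz => dist_eq_norm w z ▸ infDist_frontier_le_dist hw fun hzΩ => hz ⟨z, hzΩ, rfl⟩
  rw [sphDiamCompl_eq_sSup, deltaOm_eq_sInf, mul_comm (sInf _), ← mul_assoc]
  refine mul_csSup_le_mul_csInf infDist_nonneg (by positivity)
    ⟨_, mem_image2_of_mem (mem_compl infty_notMem_image_coe) (mem_compl infty_notMem_image_coe)⟩
    ((sphereFrontier_nonempty ⟨w, hw⟩ hΩc).image _) ?_
  rintro _ ⟨a, ha, b, hb, rfl⟩ _ ⟨α, hα, rfl⟩
  rw [mul_assoc]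
  exact mul_chordalDist_le_four infDist_nonneg hK ha hb (sphereFrontier_subset_compl hΩ hα)

theorem C_mul_sphDiam_le_four_tildeC_general (Ω : Set ℂ) (hΩ : IsHyperbolicDomain Ω) (p : ℂ → ℂ)
    (hmaps : MapsTo p (ball (0 : ℂ) 1) Ω) :
    sInf ((fun z => Metric.infDist (p z) (frontier Ω) /
        ((1 - ‖z‖ ^ 2) * ‖deriv p z‖)) '' ball (0 : ℂ) 1) * sphDiamCompl Ω ≤
      4 * sInf ((fun z => deltaOm Ω (p z) * (1 + ‖p z‖ ^ 2) /
        ((1 - ‖z‖ ^ 2) * ‖deriv p z‖)) '' ball (0 : ℂ) 1) := by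
  obtain ⟨hΩo, -, hΩc⟩ := hΩ
  have hden : ∀ z ∈ ball (0 : ℂ) 1, 0 ≤ (1 - ‖z‖ ^ 2) * ‖deriv p z‖ := fun z hz =>
    mul_nonneg (sub_nonneg.2 (pow_le_one₀ (norm_nonneg z) (mem_ball_zero_iff.1 hz).le))
      (norm_nonneg _)
  refine csInf_image_mul_le_mul_csInf_image ⟨0, mem_ball_self one_pos⟩ ⟨0, ?_⟩
    (sphDiamCompl_nonneg Ω) zero_le_four fun z hz => ?_
  · rintro _ ⟨z, hz, rfl⟩
    exact div_nonneg infDist_nonneg (hden z hz)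
  · rw [div_mul_eq_mul_div, ← mul_div_assoc]
    exact div_le_div_of_nonneg_right
      (infDist_frontier_mul_sphDiamCompl_le hΩo hΩc.nonempty (hmaps hz)) (hden z hz)

theorem C_mul_sphDiam_le_four_tildeC (Ω : Set ℂ) (hΩ : IsHyperbolicDomain Ω) (p : ℂ → ℂ)
    (hmaps : MapsTo p (ball (0 : ℂ) 1) Ω)
    (hsurj : SurjOn p (ball (0 : ℂ) 1) Ω)
    (hdiff : DifferentiableOn ℂ p (ball (0 : ℂ) 1))
    (hcov : IsCoveringMap (Set.MapsTo.restrict p (ball (0 : ℂ) 1) Ω hmaps)) :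
    sInf ((fun z => Metric.infDist (p z) (frontier Ω) /
        ((1 - ‖z‖ ^ 2) * ‖deriv p z‖)) '' ball (0 : ℂ) 1) * sphDiamCompl Ω ≤
      4 * sInf ((fun z => deltaOm Ω (p z) * (1 + ‖p z‖ ^ 2) /
        ((1 - ‖z‖ ^ 2) * ‖deriv p z‖)) '' ball (0 : ℂ) 1) :=
  C_mul_sphDiam_le_four_tildeC_general Ω hΩ p hmaps
end

section
/- Let Ω ⊆ ℂ be a hyperbolic domain and let f : Ω → ℂ be an injective holomorphic map such that f(Ω) is a hyperbolic domain and such that for every open Euclidean disk D contained in Ω the image f(D) is a convex set (f is disk-convex). Then for every z ∈ Ω one has d_Ω(z)·|f′(z)| ≤ 2·d_{f(Ω)}(f(z)). -/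
/-!
Let `d = d_Ω(z)`, so that `B = ball z d` lies in `Ω`, and let `w ∈ ∂f(Ω)` be nearest to `f z`.
Unless `f` is constant on `B`, `f(B)` is a convex open set missing `w`, hence lies in an open
half-plane with `w` on its boundary line. After an affine change of variable that half-plane is
`Re ζ > 0`, which the Cayley transform `ζ ↦ (ζ - ζ₀) / (ζ + conj ζ₀)` maps onto the unit disk with
`ζ₀ ↦ 0`. The Schwarz lemma on `B` for the composite, with `ζ₀` the image of `f z`, gives
`d |f'(z)| ≤ 2 dist(f z, boundary line) ≤ 2 |f z - w|`.
-/

open Set Metric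
open scoped Classical

open Complex ComplexConjugate

theorem norm_sub_lt_norm_add_conj {a b : ℂ} (ha : 0 < a.re) (hb : 0 < b.re) :
    ‖a - b‖ < ‖a + conj b‖ := by
  have hsq : normSq (a - b) < normSq (a + conj b) := by
    simp only [normSq_apply, sub_re, sub_im, add_re, add_im, conj_re, conj_im]
    nlinarith [mul_pos ha hb]
  rw [← sq_lt_sq₀ (norm_nonneg _) (norm_nonneg _), ← normSq_eq_norm_sq, ← normSq_eq_norm_sq]
  exact hsq

/-- The Schwarz lemma for maps of a disk into the right half-plane. -/
theorem norm_deriv_mul_le_two_mul_re {h : ℂ → ℂ} {z : ℂ} {R : ℝ}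
    (hd : DifferentiableOn ℂ h (ball z R)) (hR : 0 < R)
    (hpos : ∀ y ∈ ball z R, 0 < (h y).re) :
    R * ‖deriv h z‖ ≤ 2 * (h z).re := by
  have hz : z ∈ ball z R := mem_ball_self hR
  have hden : ∀ y ∈ ball z R, h y + conj (h z) ≠ 0 := fun y hy heq => by
    have := congrArg re heq
    simp only [add_re, conj_re, zero_re] at this
    linarith [hpos y hy, hpos z hz]
  set G : ℂ → ℂ := fun y => (h y - h z) / (h y + conj (h z))
  have hG : MapsTo G (ball z R) (closedBall (G z) 1) := fun y hy => by
    rw [mem_closedBall, dist_eq_norm]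
    simp only [G, sub_self, zero_div, sub_zero, norm_div]
    exact (div_lt_one (norm_pos_iff.mpr (hden y hy))).mpr
      (norm_sub_lt_norm_add_conj (hpos y hy) (hpos z hz)) |>.le
  have hGd : DifferentiableOn ℂ G (ball z R) := fun y hy =>
    (((hd y hy).sub_const _).div ((hd y hy).add_const _) (hden y hy))
  have hre : 0 < 2 * (h z).re := by linarith [hpos z hz]
  have hderiv : HasDerivAt G (deriv h z / (2 * (h z).re : ℝ)) z := by
    have hh : HasDerivAt h (deriv h z) z :=
      (hd.differentiableAt (isOpen_ball.mem_nhds hz)).hasDerivAt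
    refine ((hh.sub_const (h z)).fun_div (hh.add_const (conj (h z))) (hden z hz)).congr_deriv ?_
    have : ((2 * (h z).re : ℝ) : ℂ) ≠ 0 := ofReal_ne_zero.mpr hre.ne'
    rw [sub_self, zero_mul, sub_zero, add_conj]
    field_simp
  have hschwarz := Complex.norm_deriv_le_div_of_mapsTo_ball hGd hG hR
  rw [hderiv.deriv, norm_div, norm_real, Real.norm_of_nonneg hre.le,
    div_le_div_iff₀ hre hR] at hschwarz
  linarith

theorem norm_deriv_mul_le_of_re_mul_lt {g : ℂ → ℂ} {z w c : ℂ} {R : ℝ}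
    (hd : DifferentiableOn ℂ g (ball z R)) (hR : 0 < R)
    (hsep : ∀ y ∈ ball z R, (c * g y).re < (c * w).re) :
    R * ‖deriv g z‖ ≤ 2 * dist (g z) w := by
  have hz : z ∈ ball z R := mem_ball_self hR
  have hc : 0 < ‖c‖ := norm_pos_iff.mpr fun h0 => by simpa [h0] using hsep z hz
  set h : ℂ → ℂ := fun y => c * (w - g y)
  have hhd : DifferentiableOn ℂ h (ball z R) := (differentiableOn_const w |>.sub hd).const_mul c
  have hderiv : deriv h z = c * (0 - deriv g z) :=
    (((hasDerivAt_const z w).sub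
      (hd.differentiableAt (isOpen_ball.mem_nhds hz)).hasDerivAt).const_mul c).deriv
  have hhalf := norm_deriv_mul_le_two_mul_re hhd hR fun y hy => by
    simpa [h, mul_sub] using hsep y hy
  have hre : (h z).re ≤ ‖c‖ * dist (g z) w := by
    calc (h z).re ≤ ‖h z‖ := re_le_norm _
      _ = ‖c‖ * dist (g z) w := by rw [norm_mul, dist_comm, dist_eq_norm]
  refine le_of_mul_le_mul_left ?_ hc
  calc ‖c‖ * (R * ‖deriv g z‖) = R * ‖deriv h z‖ := by
        rw [hderiv, zero_sub, norm_mul, norm_neg]; ring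
    _ ≤ 2 * (h z).re := hhalf
    _ ≤ ‖c‖ * (2 * dist (g z) w) := by linarith

theorem norm_deriv_mul_le_of_convex_image {g : ℂ → ℂ} {z w : ℂ} {R : ℝ}
    (hd : DifferentiableOn ℂ g (ball z R)) (hR : 0 < R) (hconv : Convex ℝ (g '' ball z R))
    (hw : w ∉ interior (g '' ball z R)) :
    R * ‖deriv g z‖ ≤ 2 * dist (g z) w := by
  rcases (hd.analyticOnNhd isOpen_ball).is_constant_or_isOpen (convex_ball z R).isPreconnected
    with ⟨v, hv⟩ | hopen
  · have hconst : g =ᶠ[nhds z] fun _ => v :=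
      Filter.eventually_of_mem (isOpen_ball.mem_nhds (mem_ball_self hR)) hv
    rw [hconst.deriv_eq, deriv_const, norm_zero, mul_zero]
    positivity
  · have hopen := hopen _ subset_rfl isOpen_ball
    rw [hopen.interior_eq] at hw
    obtain ⟨ℓ, hℓ⟩ := RCLike.geometric_hahn_banach_open_point (𝕜 := ℂ) hconv hopen hw
    have hℓ_apply : ∀ u, ℓ u = ℓ 1 * u := fun u => by
      rw [mul_comm, ← smul_eq_mul, ← ℓ.map_smul, smul_eq_mul, mul_one]
    refine norm_deriv_mul_le_of_re_mul_lt hd hR (c := ℓ 1) fun y hy => ?_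
    have := hℓ (g y) (mem_image_of_mem g hy)
    rwa [hℓ_apply (g y), hℓ_apply w] at this

theorem ball_infDist_frontier_subset {E : Type*} [NormedAddCommGroup E] [NormedSpace ℝ E]
    [FiniteDimensional ℝ E] {s : Set E} {x : E} (hx : x ∈ s) :
    ball x (infDist x (frontier s)) ⊆ s := by
  rcases eq_or_ne s univ with rfl | hs
  · simp
  obtain ⟨y, hy, hyd⟩ := exists_mem_frontier_infDist_compl_eq_dist hx hs
  exact (ball_subset_ball (hyd ▸ infDist_le_dist_of_mem hy)).trans ball_infDist_compl_subset

theorem diskConvex_distortion_general (Ω : Set ℂ) (f : ℂ → ℂ)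
    (hdiff : DifferentiableOn ℂ f Ω)
    (himg : IsHyperbolicDomain (f '' Ω))
    (hconv : ∀ (c : ℂ) (r : ℝ), ball c r ⊆ Ω → Convex ℝ (f '' ball c r))
    (z : ℂ) (hz : z ∈ Ω) :
    Metric.infDist z (frontier Ω) * ‖deriv f z‖ ≤
      2 * Metric.infDist (f z) (frontier (f '' Ω)) := by
  rcases (infDist_nonneg (x := z) (s := frontier Ω)).eq_or_lt with hd | hd
  · rw [← hd, zero_mul]
    exact mul_nonneg zero_le_two infDist_nonneg
  have hball : ball z (infDist z (frontier Ω)) ⊆ Ω := ball_infDist_frontier_subset hz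
  have hfrontier : (frontier (f '' Ω)).Nonempty :=
    nonempty_frontier_iff.mpr ⟨⟨f z, mem_image_of_mem f hz⟩, nonempty_compl.mp himg.2.2.nonempty⟩
  obtain ⟨w, hw, hwd⟩ := isClosed_frontier.exists_infDist_eq_dist hfrontier (f z)
  rw [hwd]
  refine norm_deriv_mul_le_of_convex_image (hdiff.mono hball) hd (hconv _ _ hball) fun hw' => ?_
  exact disjoint_interior_frontier.notMem_of_mem_left (interior_mono (image_mono hball) hw') hw

theorem diskConvex_distortion (Ω : Set ℂ) (hΩ : IsHyperbolicDomain Ω) (f : ℂ → ℂ)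
    (hinj : InjOn f Ω) (hdiff : DifferentiableOn ℂ f Ω)
    (himg : IsHyperbolicDomain (f '' Ω))
    (hconv : ∀ (c : ℂ) (r : ℝ), ball c r ⊆ Ω → Convex ℝ (f '' ball c r))
    (z : ℂ) (hz : z ∈ Ω) :
    Metric.infDist z (frontier Ω) * ‖deriv f z‖ ≤
      2 * Metric.infDist (f z) (frontier (f '' Ω)) :=
  diskConvex_distortion_general Ω f hdiff himg hconv z hz
end

section
/- For R > 0 let 𝔻_R = {z ∈ ℂ : |z| < R}. Then inf_{w∈𝔻_R} δ_{𝔻_R}(w) · (1+|w|²) · R/(R²−|w|²) equals 1/2 if R ≤ 1, and equals R/(1+R²) (which is < 1/2) if R > 1. -/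
open Set Metric
open scoped Classical

/-- `δ` for the disk `{z : |z| < R}`: the infimum of `σ(w,a)` over the circle `|a| = R`. -/
noncomputable def deltaDR (R : ℝ) (w : ℂ) : ℝ :=
  sInf ((fun a => sph w a) '' Metric.sphere (0 : ℂ) R)

/-!
For `‖w‖ = r < R` the nearest point of the circle `|a| = R` to `w` is `R w / r`, so
`δ(w) = (R - r) / √((1 + r²)(1 + R²))` and the quantity to minimise becomes
`radialProfile R r = R √(1 + r²) / (√(1 + R²) (R + r))` on `0 ≤ r < R`.
Cauchy–Schwarz gives `R + r ≤ √(1 + R²) √(1 + r²)`, i.e. a lower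
bound `R / (1 + R²)`, attained at `r = 1/R`, which lies in `[0, R)` iff `R > 1`. When `R ≤ 1` the
profile is `≥ 1/2` because
`4R²(1 + r²) - (1 + R²)(R + r)² = (R - r)((1 - 3R²) r + R (3 - R²)) ≥ 0`,
and it tends to its value `1/2` at `r = R` as `r → R`.
-/

open Filter Topology

lemma isLeast_sph_sphere {R : ℝ} {w : ℂ} (hw : ‖w‖ ≤ R) :
    IsLeast ((fun a => sph w a) '' sphere (0 : ℂ) R)
      ((R - ‖w‖) / Real.sqrt ((1 + ‖w‖ ^ 2) * (1 + R ^ 2))) := by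
  have hR : 0 ≤ R := (norm_nonneg w).trans hw
  set u : ℂ := Complex.exp (w.arg * Complex.I)
  have hu : ‖u‖ = 1 := Complex.norm_exp_ofReal_mul_I _
  have hw_eq : (‖w‖ : ℂ) * u = w := Complex.norm_mul_exp_arg_mul_I w
  refine ⟨⟨R * u, by simp [hu, abs_of_nonneg hR], ?_⟩, ?_⟩
  · have hdist : w - R * u = ((‖w‖ - R : ℝ) : ℂ) * u := by
      push_cast; rw [sub_mul, hw_eq]
    simp only [sph, hdist, norm_mul, Complex.norm_real, Real.norm_eq_abs, hu, mul_one,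
      abs_of_nonneg hR, abs_of_nonpos (sub_nonpos.2 hw), neg_sub]
  · rintro _ ⟨a, ha, rfl⟩
    rw [mem_sphere_zero_iff_norm] at ha
    simp only [sph, ha]
    gcongr
    simpa [ha, norm_sub_rev] using norm_sub_norm_le a w

lemma deltaDR_eq {R : ℝ} {w : ℂ} (hw : ‖w‖ ≤ R) :
    deltaDR R w = (R - ‖w‖) / Real.sqrt ((1 + ‖w‖ ^ 2) * (1 + R ^ 2)) :=
  (isLeast_sph_sphere hw).csInf_eq

noncomputable def radialProfile (R r : ℝ) : ℝ :=
  R * Real.sqrt (1 + r ^ 2) / (Real.sqrt (1 + R ^ 2) * (R + r))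

lemma deltaDR_mul_density_eq {R : ℝ} {w : ℂ} (hw : ‖w‖ < R) :
    deltaDR R w * ((1 + ‖w‖ ^ 2) * (R / (R ^ 2 - ‖w‖ ^ 2))) = radialProfile R ‖w‖ := by
  have hsq : Real.sqrt (1 + ‖w‖ ^ 2) ^ 2 = 1 + ‖w‖ ^ 2 := Real.sq_sqrt (by positivity)
  have hRr : R ^ 2 - ‖w‖ ^ 2 = (R - ‖w‖) * (R + ‖w‖) := by ring
  have : R - ‖w‖ ≠ 0 := by linarith
  have : R + ‖w‖ ≠ 0 := by linarith [norm_nonneg w]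
  rw [deltaDR_eq hw.le, radialProfile, Real.sqrt_mul (by positivity), hRr]
  nth_rewrite 2 [← hsq]
  field_simp

lemma image_ball_eq_image_Ico (R : ℝ) :
    (fun w => deltaDR R w * ((1 + ‖w‖ ^ 2) * (R / (R ^ 2 - ‖w‖ ^ 2)))) '' ball (0 : ℂ) R =
      radialProfile R '' Ico 0 R := by
  ext x
  simp only [mem_image, mem_ball_zero_iff, mem_Ico]
  constructor
  · rintro ⟨w, hw, rfl⟩
    exact ⟨‖w‖, ⟨norm_nonneg w, hw⟩, (deltaDR_mul_density_eq hw).symm⟩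
  · rintro ⟨r, ⟨hr0, hrR⟩, rfl⟩
    have hnorm : ‖(r : ℂ)‖ = r := by simp [abs_of_nonneg hr0]
    have hrR' : ‖(r : ℂ)‖ < R := by rwa [hnorm]
    exact ⟨r, hrR', by rw [deltaDR_mul_density_eq hrR', hnorm]⟩

lemma div_one_add_sq_le_radialProfile {R r : ℝ} (hR : 0 < R) (hr : 0 ≤ r) :
    R / (1 + R ^ 2) ≤ radialProfile R r := by
  have hcs : R + r ≤ Real.sqrt (1 + R ^ 2) * Real.sqrt (1 + r ^ 2) := by
    rw [← Real.sqrt_mul (by positivity), Real.le_sqrt (by positivity) (by positivity)]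
    nlinarith [sq_nonneg (1 - R * r)]
  have hb : Real.sqrt (1 + R ^ 2) ^ 2 = 1 + R ^ 2 := Real.sq_sqrt (by positivity)
  rw [radialProfile, div_le_div_iff₀ (by positivity) (by positivity)]
  calc R * (Real.sqrt (1 + R ^ 2) * (R + r))
      ≤ R * (Real.sqrt (1 + R ^ 2) * (Real.sqrt (1 + R ^ 2) * Real.sqrt (1 + r ^ 2))) := by
        gcongr
    _ = R * Real.sqrt (1 + r ^ 2) * (1 + R ^ 2) := by
      linear_combination (R * Real.sqrt (1 + r ^ 2)) * hb

lemma radialProfile_inv {R : ℝ} (hR : 0 < R) : radialProfile R R⁻¹ = R / (1 + R ^ 2) := by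
  have hinv : 1 + R⁻¹ ^ 2 = (Real.sqrt (1 + R ^ 2) / R) ^ 2 := by
    rw [div_pow, Real.sq_sqrt (by positivity)]
    field_simp
    ring
  have : Real.sqrt (1 + R ^ 2) ≠ 0 := by positivity
  rw [radialProfile, hinv, Real.sqrt_sq (by positivity)]
  field_simp
  ring

lemma half_le_radialProfile {R r : ℝ} (hR : 0 < R) (hR1 : R ≤ 1) (hr : 0 ≤ r)
    (hrR : r ≤ R) :
    1 / 2 ≤ radialProfile R r := by
  have hR2 : 0 ≤ 1 - R ^ 2 := by nlinarith
  have hq : 0 ≤ (1 - 3 * R ^ 2) * r + R * (3 - R ^ 2) := by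
    nlinarith [mul_nonneg hr hR2, mul_nonneg hR.le hR2]
  have hsq : (Real.sqrt (1 + R ^ 2) * (R + r)) ^ 2 ≤ (2 * R * Real.sqrt (1 + r ^ 2)) ^ 2 := by
    rw [mul_pow, mul_pow, Real.sq_sqrt (by positivity), Real.sq_sqrt (by positivity)]
    nlinarith [mul_nonneg (sub_nonneg.2 hrR) hq]
  rw [radialProfile, le_div_iff₀ (by positivity)]
  linarith [(pow_le_pow_iff_left₀ (by positivity) (by positivity) two_ne_zero).1 hsq]

lemma radialProfile_self {R : ℝ} (hR : 0 < R) : radialProfile R R = 1 / 2 := by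
  rw [radialProfile]
  field_simp
  ring

lemma continuousAt_radialProfile {R r : ℝ} (hRr : R + r ≠ 0) :
    ContinuousAt (radialProfile R) r := by
  unfold radialProfile
  exact ContinuousAt.div (by fun_prop) (by fun_prop) (mul_ne_zero (by positivity) hRr)

lemma div_one_add_sq_lt_half {R : ℝ} (hR : R ≠ 1) : R / (1 + R ^ 2) < 1 / 2 := by
  rw [div_lt_div_iff₀ (by positivity) two_pos]
  nlinarith [sq_pos_of_ne_zero (sub_ne_zero.2 hR)]

lemma isLeast_radialProfile_Ico {R : ℝ} (hR : 1 < R) :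
    IsLeast (radialProfile R '' Ico 0 R) (R / (1 + R ^ 2)) := by
  have hR0 : 0 < R := one_pos.trans hR
  have hmem : R⁻¹ ∈ Ico 0 R := ⟨by positivity, (inv_lt_one_of_one_lt₀ hR).trans hR⟩
  refine ⟨⟨R⁻¹, hmem, radialProfile_inv hR0⟩, ?_⟩
  rintro _ ⟨r, hr, rfl⟩
  exact div_one_add_sq_le_radialProfile hR0 hr.1

lemma isGLB_radialProfile_Ico {R : ℝ} (hR : 0 < R) (hR1 : R ≤ 1) :
    IsGLB (radialProfile R '' Ico 0 R) (1 / 2) := by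
  refine ⟨?_, fun b hb => ?_⟩
  · rintro _ ⟨r, hr, rfl⟩
    exact half_le_radialProfile hR hR1 hr.1 hr.2.le
  · have hlim : Tendsto (radialProfile R) (𝓝[<] R) (𝓝 (1 / 2)) :=
      radialProfile_self hR ▸ (continuousAt_radialProfile (by positivity)).tendsto.mono_left
        nhdsWithin_le_nhds
    refine ge_of_tendsto hlim ?_
    filter_upwards [Ioo_mem_nhdsLT hR] with r hr
    exact hb ⟨r, ⟨hr.1.le, hr.2⟩, rfl⟩

theorem tildeC_disk (R : ℝ) (hR : 0 < R) :
    (sInf ((fun w => deltaDR R w * ((1 + ‖w‖ ^ 2) * (R / (R ^ 2 - ‖w‖ ^ 2)))) ''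
        ball (0 : ℂ) R) = if R ≤ 1 then 1 / 2 else R / (1 + R ^ 2)) ∧
      (1 < R → R / (1 + R ^ 2) < 1 / 2) := by
  refine ⟨?_, fun h => div_one_add_sq_lt_half h.ne'⟩
  rw [image_ball_eq_image_Ico]
  split_ifs with h
  · exact (isGLB_radialProfile_Ico hR h).csInf_eq ⟨_, mem_image_of_mem _ ⟨le_rfl, hR⟩⟩
  · exact (isLeast_radialProfile_Ico (not_le.1 h)).csInf_eq
end
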